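/- w(3) = 9. That is: (i) there exists a 3-covering of [3]×[3] (so the value ab = 9 is attained); and (ii) for all integers a, b ≥ 2, if there exists a 3-covering of [a]×[b] then a ≥ 3 and b ≥ 3, hence ab ≥ 9. -/

import Mathlib

/-!
Double counting: in a `k`-covering of `[a]×[b]`, each row `x` lies in at least two of the `A_ℓ`,
for otherwise the `B_ℓ` with `x ∈ A_ℓ` would reduce to a single proper subset of `[b]` covering
all of `[b]`. As each `A_ℓ` has at most `a - 1` elements, `2a ≤ k(a - 1)`, which for `k = 3`
forces `a ≥ 3`; by symmetry also `b ≥ 3`.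
-/

/-- A `k`-covering of `[a]×[b]`: subsets `A_ℓ ⊆ [a] = {1,…,a}` and `B_ℓ ⊆ [b] = {1,…,b}`,
each a nonempty proper subset, with `[a]×[b] ⊆ ⋃_ℓ (A_ℓ × B_ℓ)`. -/
def IsCovering (a b k : ℕ) (A B : Fin k → Finset ℕ) : Prop :=
  (∀ ℓ : Fin k, A ℓ ⊆ Finset.Icc 1 a ∧ (A ℓ).Nonempty ∧ A ℓ ≠ Finset.Icc 1 a) ∧
  (∀ ℓ : Fin k, B ℓ ⊆ Finset.Icc 1 b ∧ (B ℓ).Nonempty ∧ B ℓ ≠ Finset.Icc 1 b) ∧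
  (∀ x ∈ Finset.Icc 1 a, ∀ y ∈ Finset.Icc 1 b, ∃ ℓ : Fin k, x ∈ A ℓ ∧ y ∈ B ℓ)

open Finset

namespace IsCovering

variable {a b k : ℕ} {A B : Fin k → Finset ℕ}

theorem symm (h : IsCovering a b k A B) : IsCovering b a k B A := by
  obtain ⟨hA, hB, hcov⟩ := h
  refine ⟨hB, hA, fun y hy x hx => ?_⟩
  obtain ⟨ℓ, hxA, hyB⟩ := hcov x hx y hy
  exact ⟨ℓ, hyB, hxA⟩

theorem card_lt (h : IsCovering a b k A B) (ℓ : Fin k) : #(A ℓ) < a := by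
  obtain ⟨hsub, -, hne⟩ := h.1 ℓ
  simpa using card_lt_card (hsub.ssubset_of_ne hne)

theorem two_le_card_filter_mem (h : IsCovering a b k A B) (hb : 1 ≤ b) {x : ℕ}
    (hx : x ∈ Icc 1 a) : 2 ≤ #{ℓ | x ∈ A ℓ} := by
  obtain ⟨-, hB, hcov⟩ := h
  by_contra! hlt
  obtain ⟨ℓ₀, hxA₀, -⟩ := hcov x hx 1 (mem_Icc.mpr ⟨le_rfl, hb⟩)
  have hunique : ∀ ℓ, x ∈ A ℓ → ℓ = ℓ₀ := fun ℓ hxA =>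
    card_le_one.mp (Nat.le_of_lt_succ hlt) ℓ (by simpa using hxA) ℓ₀ (by simpa using hxA₀)
  refine (hB ℓ₀).2.2 (Subset.antisymm (hB ℓ₀).1 fun y hy => ?_)
  obtain ⟨ℓ, hxA, hyB⟩ := hcov x hx y hy
  rwa [← hunique ℓ hxA]

theorem two_mul_le_mul_sub_one (h : IsCovering a b k A B) (hb : 1 ≤ b) : 2 * a ≤ k * (a - 1) :=
  calc 2 * a = ∑ _x ∈ Icc 1 a, 2 := by simp [mul_comm]
    _ ≤ ∑ x ∈ Icc 1 a, #(univ.bipartiteAbove (fun x ℓ => x ∈ A ℓ) x) :=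
      sum_le_sum fun x hx => h.two_le_card_filter_mem hb hx
    _ = ∑ ℓ, #((Icc 1 a).bipartiteBelow (fun x ℓ => x ∈ A ℓ) ℓ) :=
      sum_card_bipartiteAbove_eq_sum_card_bipartiteBelow _
    _ = ∑ ℓ, #(A ℓ) := by
      refine sum_congr rfl fun ℓ _ => congrArg card ?_
      exact filter_mem_eq_inter.trans (inter_eq_right.mpr (h.1 ℓ).1)
    _ ≤ ∑ _ℓ : Fin k, (a - 1) := sum_le_sum fun ℓ _ => Nat.le_sub_one_of_lt (h.card_lt ℓ)
    _ = k * (a - 1) := by simp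

end IsCovering

/-- `w(3) = 9`: (i) a 3-covering of `[3]×[3]` exists (so `ab = 9` is attained);
(ii) for all `a, b ≥ 2`, if a 3-covering of `[a]×[b]` exists then `a ≥ 3`, `b ≥ 3`, and hence
`ab ≥ 9`. -/
theorem stmt_13 :
    (∃ A B : Fin 3 → Finset ℕ, IsCovering 3 3 3 A B) ∧
    (∀ a b : ℕ, 2 ≤ a → 2 ≤ b →
      (∃ A B : Fin 3 → Finset ℕ, IsCovering a b 3 A B) →
      3 ≤ a ∧ 3 ≤ b ∧ 9 ≤ a * b) := by
  refine ⟨⟨![{1, 2}, {2, 3}, {1, 3}], ![{1, 2}, {2, 3}, {1, 3}], by unfold IsCovering; decide⟩, ?_⟩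
  rintro a b ha hb ⟨A, B, hcov⟩
  have ha3 : 3 ≤ a := by have := hcov.two_mul_le_mul_sub_one (by omega); omega
  have hb3 : 3 ≤ b := by have := hcov.symm.two_mul_le_mul_sub_one (by omega); omega
  exact ⟨ha3, hb3, Nat.mul_le_mul ha3 hb3⟩
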